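/- For every NBC spanning tree T of G, R(T) = IN(T), where R(T) := {x ∈ E(T) : there exists an NBC spanning tree T' < T (in lexicographic order) with E(T) \ {x} ⊆ E(T')}. -/

import Mathlib

open SimpleGraph

variable {V : Type*}

/-- `T` is a spanning tree of `G`: a subgraph of `G` (on the same vertex set) that is a tree. -/
def IsSpanningTree (G T : SimpleGraph V) : Prop :=
  T ≤ G ∧ T.IsTree

/-- `cutset G T e`: the set of edges of `G` whose endpoints lie in the two different
components of `T` with the edge `e` deleted. -/
def cutset (G T : SimpleGraph V) (e : Sym2 V) : Set (Sym2 V) :=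
  {f | f ∈ G.edgeSet ∧ ∀ u v : V, f = s(u, v) → ¬ (T.deleteEdges {e}).Reachable u v}

/-- `cycset T f`: the edge set of the unique cycle of `T` with the edge `f` added
(an edge of the unicyclic connected graph `T + f` lies on the cycle iff deleting it
keeps the graph connected). -/
def cycset (T : SimpleGraph V) (f : Sym2 V) : Set (Sym2 V) :=
  {e | e ∈ (T ⊔ fromEdgeSet {f}).edgeSet ∧
    ((T ⊔ fromEdgeSet {f}).deleteEdges {e}).Connected}

/-- An edge `e` of `T` is internally active if it is the minimum of `cutset G T e`. -/
def InternallyActive [inst : LinearOrder (Sym2 V)] (G T : SimpleGraph V) (e : Sym2 V) : Prop :=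
  e ∈ T.edgeSet ∧ ∀ f ∈ cutset G T e, @LE.le (Sym2 V) inst.toPartialOrder.toPreorder.toLE e f

/-- `IN G T`: the set of internally inactive edges of `T`. -/
def IN [LinearOrder (Sym2 V)] (G T : SimpleGraph V) : Set (Sym2 V) :=
  {e | e ∈ T.edgeSet ∧ ¬ InternallyActive G T e}

/-- `C` is the edge set of some cycle of `G`. -/
def IsCycleEdgeSet (G : SimpleGraph V) (C : Set (Sym2 V)) : Prop :=
  ∃ (v : V) (w : G.Walk v v), w.IsCycle ∧ C = {e | e ∈ w.edges}

/-- A broken circuit: the edge set of a cycle with its minimum edge removed. -/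
def IsBrokenCircuit [inst : LinearOrder (Sym2 V)] (G : SimpleGraph V) (B : Set (Sym2 V)) : Prop :=
  ∃ (C : Set (Sym2 V)) (e : Sym2 V),
    IsCycleEdgeSet G C ∧ e ∈ C ∧ (∀ f ∈ C, @LE.le (Sym2 V) inst.toPartialOrder.toPreorder.toLE e f) ∧ B = C \ {e}

/-- A set of edges is NBC if it contains no broken circuit. -/
def IsNBC [LinearOrder (Sym2 V)] (G : SimpleGraph V) (S : Set (Sym2 V)) : Prop :=
  ∀ B : Set (Sym2 V), IsBrokenCircuit G B → ¬ B ⊆ S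

/-- `T` is an NBC spanning tree of `G`. -/
def IsNBCSpanningTree [LinearOrder (Sym2 V)] (G T : SimpleGraph V) : Prop :=
  IsSpanningTree G T ∧ IsNBC G T.edgeSet

/-- The edge set of `T` written as a list in increasing order. -/
noncomputable def edgeList [Fintype V] [inst : LinearOrder (Sym2 V)] (T : SimpleGraph V) :
    List (Sym2 V) :=
  (Set.toFinite T.edgeSet).toFinset.sort (fun a b => @LE.le (Sym2 V) inst.toPartialOrder.toPreorder.toLE a b)

/-- Lexicographic order on spanning trees via their sorted edge lists. -/
def treeLexLT [Fintype V] [inst : LinearOrder (Sym2 V)] (T T' : SimpleGraph V) : Prop :=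
  List.Lex (fun a b => @LT.lt (Sym2 V) inst.toPartialOrder.toPreorder.toLT a b) (edgeList T) (edgeList T')

attribute [-instance] Sym2.instPartialOrder

section ListAux
variable {α : Type*} [LinearOrder α]

private lemma oi_lex {f x : α} (h : f < x) :
    ∀ (l : List α), f ∉ l →
      List.Lex (· < ·) (l.orderedInsert (· ≤ ·) f) (l.orderedInsert (· ≤ ·) x)
  | [], _ => List.Lex.rel h
  | a :: t, hf => by
    simp only [List.orderedInsert]
    by_cases hfa : f ≤ a
    · rw [if_pos hfa]
      by_cases hxa : x ≤ a
      · rw [if_pos hxa]; exact List.Lex.rel h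
      · rw [if_neg hxa]
        exact List.Lex.rel (lt_of_le_of_ne hfa fun he => hf (he ▸ List.mem_cons_self))
    · rw [if_neg hfa, if_neg fun hxa => hfa (h.le.trans hxa)]
      exact List.Lex.cons (oi_lex h t fun ht => hf (List.mem_cons_of_mem a ht))

private lemma sort_insert_eq {s : Finset α} {a : α} (ha : a ∉ s) :
    (insert a s).sort (· ≤ ·) = (s.sort (· ≤ ·)).orderedInsert (· ≤ ·) a := by
  refine List.Perm.eq_of_pairwise' (Finset.pairwise_sort _ _)
    ((Finset.pairwise_sort s (· ≤ ·)).orderedInsert _ _) ?_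
  refine ((Finset.sort_perm_toList _ _).trans ((Finset.toList_insert ha).trans ?_)).trans
    (List.perm_orderedInsert _ _ _).symm
  exact List.Perm.cons a (Finset.sort_perm_toList _ _).symm

private lemma lex_of_insert {s : Finset α} {f x : α} (hf : f ∉ s) (hx : x ∉ s) (h : f < x) :
    List.Lex (· < ·) ((insert f s).sort (· ≤ ·)) ((insert x s).sort (· ≤ ·)) := by
  rw [sort_insert_eq hf, sort_insert_eq hx]
  exact oi_lex h _ (by simpa using hf)

private lemma lex_asymm : ∀ {l₁ l₂ : List α},
    List.Lex (· < ·) l₁ l₂ → List.Lex (· < ·) l₂ l₁ → False := by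
  intro l₁ l₂ h₁
  induction h₁ with
  | nil => intro h₂; cases h₂
  | @rel a l₁' b l₂' hab =>
    intro h₂
    cases h₂ with
    | rel h => exact absurd hab (lt_asymm h)
    | cons h => exact lt_irrefl _ hab
  | @cons a l₁' l₂' h ih =>
    intro h₂
    cases h₂ with
    | rel h' => exact lt_irrefl _ h'
    | cons h' => exact ih h'
end ListAux

section GraphAux
variable {V : Type*}

private lemma two_sides_aux {T : SimpleGraph V} {u v : V} :
    ∀ {w : V} (_ : T.Walk w u),
      (T.deleteEdges {s(u, v)}).Reachable w u ∨ (T.deleteEdges {s(u, v)}).Reachable w v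
  | _, SimpleGraph.Walk.nil => Or.inl (Reachable.refl _)
  | a, @SimpleGraph.Walk.cons _ _ _ c _ h q => by
    by_cases he : s(a, c) = s(u, v)
    · rw [Sym2.eq_iff] at he
      rcases he with ⟨rfl, rfl⟩ | ⟨rfl, rfl⟩
      · exact Or.inl (Reachable.refl _)
      · exact Or.inr (Reachable.refl _)
    · have hadj : (T.deleteEdges {s(u, v)}).Adj a c := by
        rw [deleteEdges_adj]
        exact ⟨h, by simpa using he⟩
      rcases two_sides_aux q with h' | h'
      · exact Or.inl (hadj.reachable.trans h')
      · exact Or.inr (hadj.reachable.trans h')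

private lemma two_sides {T : SimpleGraph V} (hc : T.Preconnected) (u v w : V) :
    (T.deleteEdges {s(u, v)}).Reachable w u ∨ (T.deleteEdges {s(u, v)}).Reachable w v := by
  obtain ⟨p⟩ := hc w u
  exact two_sides_aux p

private lemma walk_cross {H K : SimpleGraph V} {a b : V} (p : H.Walk a b)
    (h : ∀ e ∈ p.edges, ∀ c d, e = s(c, d) → K.Reachable c d) : K.Reachable a b := by
  induction p with
  | nil => exact Reachable.refl _
  | @cons a' c' _ h' q ih =>
    have h1 : K.Reachable a' c' := h _ (by simp) _ _ rfl
    exact h1.trans (ih fun e he c d hcd => h e (by simp [he]) c d hcd)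

private lemma mem_cutset_of {G T : SimpleGraph V} {e : Sym2 V} {a b : V}
    (hG : s(a, b) ∈ G.edgeSet) (h : ¬(T.deleteEdges {e}).Reachable a b) :
    s(a, b) ∈ cutset G T e := by
  refine ⟨hG, fun u v huv => ?_⟩
  rw [Sym2.eq_iff] at huv
  rcases huv with ⟨rfl, rfl⟩ | ⟨rfl, rfl⟩
  · exact h
  · exact fun hr => h hr.symm

private lemma tree_edge_not_reachable {T : SimpleGraph V} (hT : T.IsAcyclic) {u v : V}
    (h : T.Adj u v) : ¬(T.deleteEdges {s(u, v)}).Reachable u v :=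
  isBridge_iff.mp ((isAcyclic_iff_forall_adj_isBridge.mp hT) h)

private lemma no_cycle_cross {T' : SimpleGraph V} (hT' : T'.IsAcyclic) {c d : V}
    (hAdj : T'.Adj c d) (hreach : (T'.deleteEdges {s(c, d)}).Reachable c d) : False := by
  obtain ⟨z, p, hp, -⟩ := adj_and_reachable_delete_edges_iff_exists_cycle.mp ⟨hAdj, hreach⟩
  exact hT' p hp

private lemma sup_cross_connected {T : SimpleGraph V} (hc : T.Connected) {u v a b : V}
    (hab : a ≠ b) (hnab : ¬(T.deleteEdges {s(u, v)}).Reachable a b) :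
    ((T.deleteEdges {s(u, v)}) ⊔ fromEdgeSet {s(a, b)}).Connected := by
  have hne : Nonempty V := hc.nonempty
  have hAdj : ((T.deleteEdges {s(u, v)}) ⊔ fromEdgeSet {s(a, b)}).Adj a b :=
    Or.inr (by rw [fromEdgeSet_adj]; exact ⟨rfl, hab⟩)
  have hcov : ∀ w, (T.deleteEdges {s(u, v)}).Reachable w a ∨
      (T.deleteEdges {s(u, v)}).Reachable w b := by
    intro w
    rcases two_sides hc.preconnected u v a with ha | ha <;>
      rcases two_sides hc.preconnected u v b with hb | hb
    · exact absurd (ha.trans hb.symm) hnab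
    · rcases two_sides hc.preconnected u v w with hw | hw
      · exact Or.inl (hw.trans ha.symm)
      · exact Or.inr (hw.trans hb.symm)
    · rcases two_sides hc.preconnected u v w with hw | hw
      · exact Or.inr (hw.trans hb.symm)
      · exact Or.inl (hw.trans ha.symm)
    · exact absurd (ha.trans hb.symm) hnab
  have r : ∀ w, ((T.deleteEdges {s(u, v)}) ⊔ fromEdgeSet {s(a, b)}).Reachable w a := by
    intro w
    rcases hcov w with h | h
    · exact h.mono le_sup_left
    · exact (h.mono le_sup_left).trans hAdj.symm.reachable
  exact ⟨fun w₁ w₂ => (r w₁).trans (r w₂).symm⟩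
end GraphAux

private lemma sym2_rep {V : Type*} (e : Sym2 V) : ∃ a b, e = s(a, b) :=
  Sym2.ind (fun a b => ⟨a, b, rfl⟩) e

section MainAux
variable {V : Type*} [Fintype V] [LinearOrder (Sym2 V)]

private lemma treeLex_of {T T' : SimpleGraph V} {f x : Sym2 V} {S : Set (Sym2 V)}
    (hT' : T'.edgeSet = S ∪ {f}) (hT : T.edgeSet = S ∪ {x})
    (hfS : f ∉ S) (hxS : x ∉ S) (hfx : f < x) : treeLexLT T' T := by
  have h1 : (Set.toFinite T'.edgeSet).toFinset = insert f (Set.toFinite S).toFinset := by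
    ext e
    simp only [Set.Finite.mem_toFinset, hT', Set.mem_union, Set.mem_singleton_iff,
      Finset.mem_insert]
    exact or_comm
  have h2 : (Set.toFinite T.edgeSet).toFinset = insert x (Set.toFinite S).toFinset := by
    ext e
    simp only [Set.Finite.mem_toFinset, hT, Set.mem_union, Set.mem_singleton_iff,
      Finset.mem_insert]
    exact or_comm
  unfold treeLexLT edgeList
  rw [h1, h2]
  exact lex_of_insert (by simpa using hfS) (by simpa using hxS) hfx

private lemma exchange {G T : SimpleGraph V} (hTG : T ≤ G) (hTtree : T.IsTree)
    (hTNBC : IsNBC G T.edgeSet) {x f : Sym2 V} (hxT : x ∈ T.edgeSet)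
    (hfcut : f ∈ cutset G T x) (hfmin : ∀ g ∈ cutset G T x, f ≤ g) (hfx : f < x) :
    ∃ T' : SimpleGraph V, IsNBCSpanningTree G T' ∧ treeLexLT T' T ∧
      T.edgeSet \ {x} ⊆ T'.edgeSet := by
  obtain ⟨u, v, rfl⟩ := sym2_rep x
  obtain ⟨a, b, rfl⟩ := sym2_rep f
  set K := T.deleteEdges {s(u, v)} with hK
  have hfG : s(a, b) ∈ G.edgeSet := hfcut.1
  have hab : a ≠ b := fun h =>
    (G.not_isDiag_of_mem_edgeSet hfG) (Sym2.mk_isDiag_iff.mpr h)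
  have hfK : ¬K.Reachable a b := hfcut.2 a b rfl
  have hfS : s(a, b) ∉ T.edgeSet \ {s(u, v)} := by
    intro hmem
    have hmem' : s(a, b) ∈ K.edgeSet := by rw [hK, edgeSet_deleteEdges]; exact hmem
    rw [mem_edgeSet] at hmem'
    exact hfK hmem'.reachable
  set T' := K ⊔ fromEdgeSet {s(a, b)} with hT'def
  have hET' : T'.edgeSet = (T.edgeSet \ {s(u, v)}) ∪ {s(a, b)} := by
    rw [hT'def, edgeSet_sup, hK, edgeSet_deleteEdges, edgeSet_fromEdgeSet]
    congr 1
    ext e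
    simp only [Set.mem_diff, Set.mem_singleton_iff, Set.mem_setOf_eq, and_iff_left_iff_imp]
    rintro rfl
    exact fun hd => hab (Sym2.mk_isDiag_iff.mp hd)
  have hsub : T.edgeSet \ {s(u, v)} ⊆ T'.edgeSet := by
    rw [hET']; exact Set.subset_union_left
  have hT'G : T' ≤ G := by
    rw [← edgeSet_subset_edgeSet, hET']
    rintro e (⟨he, -⟩ | he)
    · exact edgeSet_subset_edgeSet.mpr hTG he
    · rw [Set.mem_singleton_iff] at he; rw [he]; exact hfG
  have hconnT' : T'.Connected := sup_cross_connected hTtree.isConnected hab hfK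
  have hle2 : T'.deleteEdges {s(a, b)} ≤ K := by
    rw [← edgeSet_subset_edgeSet, edgeSet_deleteEdges, hET', hK, edgeSet_deleteEdges]
    rintro e ⟨he1 | he1, he2⟩
    · exact he1
    · exact absurd he1 he2
  have hacyc : T'.IsAcyclic := by
    intro z c hc
    by_cases hfc : s(a, b) ∈ c.edges
    · have hh := (adj_and_reachable_delete_edges_iff_exists_cycle
        (G := T') (v := a) (w := b)).mpr ⟨z, c, hc, hfc⟩
      have hr : (T'.deleteEdges {s(a, b)}).Reachable a b := hh.2
      exact hfK (hr.mono hle2)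
    · have hsubE : ∀ e ∈ c.edges, e ∈ T.edgeSet := by
        intro e he
        have h1 := c.edges_subset_edgeSet he
        rw [hET'] at h1
        rcases h1 with ⟨h1, -⟩ | h1
        · exact h1
        · rw [Set.mem_singleton_iff] at h1; rw [h1] at he; exact absurd he hfc
      exact hTtree.IsAcyclic (c.transfer T hsubE) (hc.transfer hsubE)
  have hNBC : IsNBC G T'.edgeSet := by
    rintro B ⟨C, e0, ⟨z, w, hw, hCdef⟩, he0C, he0min, hBdef⟩ hBT'
    subst hCdef hBdef
    by_cases hfB : s(a, b) ∈ {e | e ∈ w.edges} \ {e0}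
    · have hfC : s(a, b) ∈ w.edges := hfB.1
      have hwE : ∀ e ∈ w.edges, e ∈ (fromEdgeSet {e | e ∈ w.edges}).edgeSet := by
        intro e he
        rw [edgeSet_fromEdgeSet]
        exact ⟨he, G.not_isDiag_of_mem_edgeSet (w.edges_subset_edgeSet he)⟩
      have hadjC : (fromEdgeSet {e | e ∈ w.edges}).Adj a b := by
        rw [fromEdgeSet_adj]; exact ⟨hfC, hab⟩
      have hh := (adj_and_reachable_delete_edges_iff_exists_cycle
          (G := fromEdgeSet {e | e ∈ w.edges}) (v := a) (w := b)).mpr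
          ⟨z, w.transfer _ hwE, hw.transfer hwE, by rw [Walk.edges_transfer]; exact hfC⟩
      have hreach : ((fromEdgeSet {e | e ∈ w.edges}).deleteEdges {s(a, b)}).Reachable a b :=
        hh.2
      obtain ⟨p⟩ := hreach
      have hcross : ¬ ∀ e ∈ p.edges, ∀ c' d', e = s(c', d') → K.Reachable c' d' :=
        fun hall => hfK (walk_cross p hall)
      push_neg at hcross
      obtain ⟨g, hgp, c', d', hgcd, hncd⟩ := hcross
      subst hgcd
      have hgE := p.edges_subset_edgeSet hgp
      rw [edgeSet_deleteEdges, edgeSet_fromEdgeSet] at hgE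
      obtain ⟨⟨hgC, -⟩, hgf⟩ := hgE
      rw [Set.mem_singleton_iff] at hgf
      have hgcut : s(c', d') ∈ cutset G T (s(u, v)) :=
        mem_cutset_of (w.edges_subset_edgeSet hgC) hncd
      have hfg : s(a, b) < s(c', d') := (hfmin _ hgcut).lt_of_ne (Ne.symm hgf)
      by_cases hge0 : s(c', d') = e0
      · exact absurd (he0min _ hfB.1) (not_le.mpr (hge0 ▸ hfg))
      · have hgB : s(c', d') ∈ {e | e ∈ w.edges} \ {e0} := ⟨hgC, hge0⟩
        have hgT' := hBT' hgB
        rw [hET'] at hgT'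
        rcases hgT' with hg1 | hg1
        · have hKadj : K.Adj c' d' := by
            rw [← mem_edgeSet, hK, edgeSet_deleteEdges]
            exact hg1
          exact hncd hKadj.reachable
        · exact hgf (Set.mem_singleton_iff.mp hg1)
    · refine hTNBC _ ⟨_, e0, ⟨z, w, hw, rfl⟩, he0C, he0min, rfl⟩ ?_
      intro e heB
      have he' := hBT' heB
      rw [hET'] at he'
      rcases he' with ⟨h1, -⟩ | h1
      · exact h1
      · rw [Set.mem_singleton_iff] at h1
        rw [h1] at heB
        exact absurd heB hfB
  have hlex : treeLexLT T' T :=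
    treeLex_of hET'
      (Set.diff_union_of_subset (Set.singleton_subset_iff.mpr hxT)).symm
      hfS (fun h => h.2 rfl) hfx
  exact ⟨T', ⟨⟨hT'G, ⟨hconnT', hacyc⟩⟩, hNBC⟩, hlex, hsub⟩

end MainAux

/-- for every NBC spanning tree `T` of `G`, the restriction set
`R(T) = {x ∈ E(T) : ∃ NBC spanning tree T' < T with E(T) \ {x} ⊆ E(T')}` equals the set
`IN(T)` of internally inactive edges of `T`. -/
theorem restriction_eq_inactive
    {V : Type*} [Fintype V] [LinearOrder (Sym2 V)] (G : SimpleGraph V)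
    (hconn : G.Connected)
    (T : SimpleGraph V) (hT : IsNBCSpanningTree G T) :
    {x | x ∈ T.edgeSet ∧ ∃ T' : SimpleGraph V, IsNBCSpanningTree G T' ∧
      treeLexLT T' T ∧ T.edgeSet \ {x} ⊆ T'.edgeSet} = IN G T := by
  obtain ⟨⟨hTG, hTtree⟩, hTNBC⟩ := hT
  ext x
  simp only [Set.mem_setOf_eq, IN]
  constructor
  · rintro ⟨hxT, T', ⟨⟨hT'G, hT'tree⟩, hT'NBC⟩, hlex, hsub⟩
    refine ⟨hxT, ?_⟩
    obtain ⟨u, v, hxuv⟩ := sym2_rep x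
    subst hxuv
    set K := T.deleteEdges {s(u, v)} with hK
    set S := T.edgeSet \ {s(u, v)} with hS
    have hKuv : ¬K.Reachable u v :=
      tree_edge_not_reachable hTtree.IsAcyclic ((mem_edgeSet T).mp hxT)
    have hKE : K.edgeSet = S := by rw [hK, edgeSet_deleteEdges]
    have claimA : ∀ g ∈ T'.edgeSet \ S, ∀ c d, g = s(c, d) → ¬K.Reachable c d := by
      rintro g ⟨hgT', hgS⟩ c d rfl hreach
      have hAdj : T'.Adj c d := (mem_edgeSet T').mp hgT'
      have hle : K ≤ T'.deleteEdges {s(c, d)} := by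
        rw [← edgeSet_subset_edgeSet, edgeSet_deleteEdges, edgeSet_deleteEdges]
        intro e he
        exact ⟨hsub he, fun h1 => hgS (Set.mem_singleton_iff.mp h1 ▸ he)⟩
      exact no_cycle_cross hT'tree.IsAcyclic hAdj (hreach.mono hle)
    have hne : ∃ g, g ∈ T'.edgeSet \ S := by
      by_contra hcon
      push_neg at hcon
      have hEq : T'.edgeSet = K.edgeSet := by
        rw [hKE]
        apply Set.Subset.antisymm
        · intro e he
          by_contra heS
          exact (hcon e) ⟨he, heS⟩
        · exact hsub
      have hTK : T' = K := edgeSet_inj.mp hEq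
      exact hKuv (hTK ▸ hT'tree.isConnected.preconnected u v)
    obtain ⟨f, hf⟩ := hne
    have huniq : ∀ g ∈ T'.edgeSet \ S, g = f := by
      rintro g hg
      by_contra hgf
      obtain ⟨c, d, hgcd⟩ := sym2_rep g
      obtain ⟨c', d', hfcd⟩ := sym2_rep f
      subst hgcd; subst hfcd
      have hcd : c ≠ d := ((mem_edgeSet T').mp hg.1).ne
      have hncd := claimA _ hg c d rfl
      have hncd' := claimA _ hf c' d' rfl
      have hconn2 := sup_cross_connected hTtree.isConnected hcd hncd
      have hle : K ⊔ fromEdgeSet {s(c, d)} ≤ T'.deleteEdges {s(c', d')} := by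
        rw [← edgeSet_subset_edgeSet, edgeSet_sup, edgeSet_deleteEdges, edgeSet_deleteEdges,
          edgeSet_fromEdgeSet]
        rintro e (he | ⟨he, -⟩)
        · exact ⟨hsub he, fun h1 => hf.2 (Set.mem_singleton_iff.mp h1 ▸ he)⟩
        · rw [Set.mem_singleton_iff] at he
          subst he
          exact ⟨hg.1, fun h1 => hgf (Set.mem_singleton_iff.mp h1)⟩
      have hAdj' : T'.Adj c' d' := (mem_edgeSet T').mp hf.1
      exact no_cycle_cross hT'tree.IsAcyclic hAdj' ((hconn2.preconnected c' d').mono hle)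
    have hET' : T'.edgeSet = S ∪ {f} := by
      ext e
      constructor
      · intro he
        by_cases heS : e ∈ S
        · exact Or.inl heS
        · exact Or.inr (Set.mem_singleton_iff.mpr (huniq e ⟨he, heS⟩))
      · rintro (he | he)
        · exact hsub he
        · rw [Set.mem_singleton_iff] at he
          rw [he]
          exact hf.1
    have hxS : s(u, v) ∉ S := fun h => h.2 rfl
    have hfS : f ∉ S := hf.2
    have hTx : T.edgeSet = S ∪ {s(u, v)} :=
      (Set.diff_union_of_subset (Set.singleton_subset_iff.mpr hxT)).symm
    have hfx : f < s(u, v) := by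
      rcases lt_trichotomy f (s(u, v)) with h | h | h
      · exact h
      · exfalso
        have hTT : T' = T := edgeSet_inj.mp (by rw [hET', h, ← hTx])
        rw [hTT] at hlex
        exact lex_asymm hlex hlex
      · exfalso
        exact lex_asymm hlex (treeLex_of hTx hET' hxS hfS h)
    obtain ⟨c, d, hfcd⟩ := sym2_rep f
    subst hfcd
    intro hact
    refine absurd (hact.2 (s(c, d)) ?_) (not_le.mpr hfx)
    exact mem_cutset_of (edgeSet_subset_edgeSet.mpr hT'G hf.1) (claimA _ hf c d rfl)
  · rintro ⟨hxT, hnact⟩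
    refine ⟨hxT, ?_⟩
    have hcut_ne : ∃ g ∈ cutset G T x, g < x := by
      by_contra hcon
      push_neg at hcon
      exact hnact ⟨hxT, fun g hg => hcon g hg⟩
    obtain ⟨g0, hg0, hg0x⟩ := hcut_ne
    have hfin : (cutset G T x).Finite := Set.toFinite _
    have hg0' : g0 ∈ hfin.toFinset := hfin.mem_toFinset.mpr hg0
    have hfmem : hfin.toFinset.min' ⟨g0, hg0'⟩ ∈ cutset G T x :=
      hfin.mem_toFinset.mp (hfin.toFinset.min'_mem _)
    have hfmin : ∀ g ∈ cutset G T x, hfin.toFinset.min' ⟨g0, hg0'⟩ ≤ g :=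
      fun g hg => hfin.toFinset.min'_le g (hfin.mem_toFinset.mpr hg)
    have hfx : hfin.toFinset.min' ⟨g0, hg0'⟩ < x :=
      lt_of_le_of_lt (hfmin g0 hg0) hg0x
    exact exchange hTG hTtree hTNBC hxT hfmem hfmin hfx
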